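/- Let C1 and C2 be convolutional codes in F[x]^n of rank k and let φ : C1 → C2 be an equivalence. Then d^r(C1) = d^r(C2) for every 1 ≤ r ≤ k. -/

import Mathlib

open Polynomial

namespace ConvCode

variable {F : Type*} [Field F] [Fintype F] {n k : ℕ}

/-- Weight of a polynomial vector: total number of nonzero coefficients. -/
noncomputable def wtv (c : Fin n → Polynomial F) : ℕ := ∑ ℓ, (c ℓ).support.card

/-- Truncation of a polynomial, keeping the coefficients of degrees `h` through `j`. -/
noncomputable def truncp (h j : ℕ) (p : Polynomial F) : Polynomial F :=
  ∑ i ∈ Finset.Icc h j, Polynomial.C (p.coeff i) * Polynomial.X ^ i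

/-- Truncation `c_{[h,j]}` of a polynomial vector. -/
noncomputable def truncv (h j : ℕ) (c : Fin n → Polynomial F) : Fin n → Polynomial F :=
  fun ℓ => truncp h j (c ℓ)

/-- Degree of a polynomial vector: the largest `i` such that `c[i] ≠ 0`. -/
def degv (c : Fin n → Polynomial F) : ℕ := Finset.univ.sup fun ℓ => (c ℓ).natDegree

/-- `φ` is a `j`-equivalence: it preserves weights of `j`-th truncations. -/
def IsJEquiv (C1 C2 : Submodule (Polynomial F) (Fin n → Polynomial F))
    (φ : C1 ≃ₗ[Polynomial F] C2) (j : ℕ) : Prop :=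
  ∀ c : C1, wtv (truncv 0 j (c : Fin n → Polynomial F)) =
    wtv (truncv 0 j ((φ c : C2) : Fin n → Polynomial F))

/-- `φ` is an equivalence: it is a `j`-equivalence for every `j`. -/
def IsEquiv (C1 C2 : Submodule (Polynomial F) (Fin n → Polynomial F))
    (φ : C1 ≃ₗ[Polynomial F] C2) : Prop := ∀ j : ℕ, IsJEquiv C1 C2 φ j

/-- `φ` is an isometry: it preserves weights. -/
def IsIsometry (C1 C2 : Submodule (Polynomial F) (Fin n → Polynomial F))
    (φ : C1 ≃ₗ[Polynomial F] C2) : Prop :=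
  ∀ c : C1, wtv (c : Fin n → Polynomial F) = wtv ((φ c : C2) : Fin n → Polynomial F)

/-- `G` is a generator matrix of `C`: its rows form an `F[x]`-basis of `C`. -/
def IsGenMat (C : Submodule (Polynomial F) (Fin n → Polynomial F))
    (G : Matrix (Fin k) (Fin n) (Polynomial F)) : Prop :=
  LinearIndependent (Polynomial F) (fun i => G i) ∧
    Submodule.span (Polynomial F) (Set.range fun i => G i) = C

/-- `G` is row reduced: its leading row coefficient matrix has full rank. -/
def RowReduced (G : Matrix (Fin k) (Fin n) (Polynomial F)) : Prop :=
  LinearIndependent F (fun i => fun ℓ => (G i ℓ).coeff (degv (G i)))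

/-- `C` is noncatastrophic: it has a generator matrix with a polynomial right inverse
whose constant term has rank `k`. -/
def Noncatastrophic (C : Submodule (Polynomial F) (Fin n → Polynomial F)) (k : ℕ) : Prop :=
  ∃ G : Matrix (Fin k) (Fin n) (Polynomial F), IsGenMat C G ∧
    (∃ H : Matrix (Fin n) (Fin k) (Polynomial F), G * H = 1) ∧
    LinearIndependent F (fun i => fun ℓ => (G i ℓ).eval 0)

/-- Joint support of a family of polynomial vectors: the pairs `(ℓ, i)` such that the
coefficient of `x^i` in the `ℓ`-th coordinate of some member is nonzero. -/
def gsupp {r : ℕ} (d : Fin r → Fin n → Polynomial F) : Set (Fin n × ℕ) :=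
  { q | ∃ s, ((d s) q.1).coeff q.2 ≠ 0 }

/-- The `(r,j)`-generalized column distance of the code generated by `G`. -/
noncomputable def gcdJ (G : Matrix (Fin k) (Fin n) (Polynomial F)) (r j : ℕ) : ℕ :=
  sInf { m | ∃ p : Fin r → Fin k → Polynomial F,
    LinearIndependent F (fun s => fun l => (p s l).eval 0) ∧
    m = (gsupp fun s => truncv 0 j (Matrix.vecMul (p s) G)).ncard }

/-- The `r`-generalized column distance: the limit as `j → ∞` of the `(r,j)`-generalized
column distances. -/
noncomputable def gcdLim (G : Matrix (Fin k) (Fin n) (Polynomial F)) (r : ℕ) : ℕ :=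
  Filter.limsup (fun j => gcdJ G r j) Filter.atTop

/-- Evaluation at `0`, as an `F`-linear map `F[x]^n → F^n`. -/
noncomputable def ev0 : (Fin n → Polynomial F) →ₗ[F] (Fin n → F) :=
  LinearMap.pi fun ℓ => (Polynomial.aeval (0 : F)).toLinearMap.comp (LinearMap.proj ℓ)

/-- `C[0] = {c(0) : c ∈ C} ⊆ F^n`. -/
noncomputable def evalZero (C : Submodule (Polynomial F) (Fin n → Polynomial F)) :
    Submodule F (Fin n → F) := (C.restrictScalars F).map ev0

/-- The `r`-th generalized Hamming weight of a block code `L ⊆ F^n`. -/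
noncomputable def hammingGW (L : Submodule F (Fin n → F)) (r : ℕ) : ℕ :=
  sInf { m | ∃ V : Submodule F (Fin n → F), V ≤ L ∧ Module.finrank F V = r ∧
    m = { ℓ : Fin n | ∃ v ∈ V, v ℓ ≠ 0 }.ncard }

/-- The `r`-th generalized weight of a convolutional code. -/
noncomputable def genWt (C : Submodule (Polynomial F) (Fin n → Polynomial F)) (r : ℕ) : ℕ :=
  sInf { m | ∃ d : Fin r → Fin n → Polynomial F, (∀ s, d s ∈ C) ∧
    (r : Cardinal) ≤ Module.rank (Polynomial F)
      ↥(Submodule.span (Polynomial F) (Set.range d)) ∧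
    m = (gsupp d).ncard }

/-- The free distance of a convolutional code. -/
noncomputable def dfree (C : Submodule (Polynomial F) (Fin n → Polynomial F)) : ℕ :=
  sInf { m | ∃ c : Fin n → Polynomial F, c ∈ C ∧ c ≠ 0 ∧ m = wtv c }

end ConvCode

/-!
The `j`-truncated joint support of codewords `c₁, …, c_r` is determined by the `j`-truncated
weights of their `F`-linear combinations: summing the weight of `∑ aₛ cₛ` over all `a ∈ F^r`
counts each position of the joint support exactly `q^r - q^(r-1)` times, the number of
`a ∈ F^r` not orthogonal to a fixed nonzero vector. A `j`-equivalence preserves these weights,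
so it preserves truncated joint supports. Read in the coordinates given by `G₁` and `G₂`, it is
an `F[x]`-automorphism of `F[x]^k`; it maps `x F[x]^k`, the kernel of evaluation at `0`, onto
itself, and hence preserves the linear independence of `p₁(0), …, p_r(0)`. So `G₁` and `G₂`
produce the same set of values in the infimum defining `d_j^r`, for every `j`.
-/

namespace Polynomial

variable {R : Type*} [CommRing R] {ι κ σ : Type*} [Fintype σ]

theorem exists_eq_X_smul_of_eval_zero {u : ι → R[X]} (h : ∀ l, (u l).eval 0 = 0) :
    ∃ w : ι → R[X], u = (X : R[X]) • w := by
  choose w hw using fun l => X_dvd_iff.2 ((coeff_zero_eq_eval_zero _).trans (h l))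
  exact ⟨w, by ext1 l; exact hw l⟩

theorem eval_zero_sum_C_smul (g : σ → R) (p : σ → ι → R[X]) :
    (fun l => ((∑ s, C (g s) • p s) l).eval 0) = ∑ s, g s • fun l => (p s l).eval 0 := by
  ext l
  simp [eval_finsetSum]

theorem _root_.LinearIndependent.eval_zero_map (θ : (ι → R[X]) ≃ₗ[R[X]] (κ → R[X]))
    {p : σ → ι → R[X]} (hp : LinearIndependent R fun s l => (p s l).eval 0) :
    LinearIndependent R fun s l => (θ (p s) l).eval 0 := by
  rw [Fintype.linearIndependent_iff] at hp ⊢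
  intro g hg
  obtain ⟨w, hw⟩ : ∃ w, θ (∑ s, C (g s) • p s) = (X : R[X]) • w := by
    refine exists_eq_X_smul_of_eval_zero fun l => ?_
    rw [map_sum]
    simp only [map_smul]
    exact (congrFun (eval_zero_sum_C_smul g fun s => θ (p s)) l).trans (congrFun hg l)
  have hX : ∑ s, C (g s) • p s = (X : R[X]) • θ.symm w := by
    rw [← map_smul, ← hw, θ.symm_apply_apply]
  refine hp g ?_
  rw [← eval_zero_sum_C_smul, hX]
  ext l
  simp

end Polynomial

namespace ConvCode

open Finset Matrix
open scoped Classical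

section Truncation

variable {F : Type*} [Field F] {n : ℕ}

theorem coeff_truncp_zero (j : ℕ) (p : F[X]) (i : ℕ) :
    (truncp 0 j p).coeff i = if i ≤ j then p.coeff i else 0 := by
  simp [truncp, coeff_C_mul, coeff_X_pow]

theorem wtv_truncv_zero (j : ℕ) (c : Fin n → F[X]) :
    wtv (truncv 0 j c) = #{q ∈ univ ×ˢ Icc 0 j | (c q.1).coeff q.2 ≠ 0} := by
  rw [card_filter, sum_product, wtv]
  refine sum_congr rfl fun ℓ _ => ?_
  rw [← card_filter]
  congr 1
  ext i
  simp [truncv, coeff_truncp_zero]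

theorem gsupp_truncv_zero (j : ℕ) {r : ℕ} (c : Fin r → Fin n → F[X]) :
    gsupp (fun s => truncv 0 j (c s)) =
      ↑{q ∈ (univ : Finset (Fin n)) ×ˢ Icc 0 j | (fun s => (c s q.1).coeff q.2) ≠ 0} := by
  ext ⟨ℓ, i⟩
  simp [gsupp, truncv, coeff_truncp_zero, Function.ne_iff]

theorem coeff_sum_C_smul {r : ℕ} (a : Fin r → F) (c : Fin r → Fin n → F[X]) (ℓ : Fin n)
    (i : ℕ) :
    ((∑ s, C (a s) • c s) ℓ).coeff i = a ⬝ᵥ fun s => (c s ℓ).coeff i := by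
  simp [dotProduct]

end Truncation

section Counting

variable {F : Type*} [Field F] [Fintype F] {n : ℕ}

theorem card_filter_dotProduct_ne_zero {r : ℕ} {v : Fin r → F} (hv : v ≠ 0) :
    #{a : Fin r → F | a ⬝ᵥ v ≠ 0} = Fintype.card F ^ r - Fintype.card F ^ (r - 1) := by
  set f := Fintype.linearCombination F v
  have hf : ∀ a, f a = a ⬝ᵥ v := fun a => by
    simp [f, Fintype.linearCombination_apply, dotProduct]
  have hsurj : Function.Surjective f := by
    obtain ⟨s, hs⟩ := Function.ne_iff.1 hv
    intro b
    refine ⟨Pi.single s (b / v s), ?_⟩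
    rw [hf, single_dotProduct, div_mul_cancel₀ _ hs]
  have hker : Module.finrank F (LinearMap.ker f) = r - 1 := by
    have := LinearMap.finrank_range_add_finrank_ker f
    rw [LinearMap.range_eq_top.2 hsurj, finrank_top, Module.finrank_self,
      Module.finrank_fintype_fun_eq_card, Fintype.card_fin] at this
    omega
  calc #{a : Fin r → F | a ⬝ᵥ v ≠ 0}
      = Fintype.card {a // ¬ a ∈ LinearMap.ker f} := by
        rw [Fintype.card_subtype]; simp [hf]
    _ = Fintype.card F ^ r - Fintype.card F ^ (r - 1) := by
        rw [Fintype.card_subtype_compl, ← hker, ← Module.card_eq_pow_finrank,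
          Fintype.card_fun, Fintype.card_fin]

theorem sum_wtv_truncv_sum_C_smul (j : ℕ) {r : ℕ} (c : Fin r → Fin n → F[X]) :
    ∑ a : Fin r → F, wtv (truncv 0 j (∑ s, C (a s) • c s)) =
      (Fintype.card F ^ r - Fintype.card F ^ (r - 1)) *
        (gsupp fun s => truncv 0 j (c s)).ncard := by
  set v : Fin n × ℕ → Fin r → F := fun q s => (c s q.1).coeff q.2
  have hcount : ∀ q, #{a : Fin r → F | a ⬝ᵥ v q ≠ 0} =
      if v q ≠ 0 then Fintype.card F ^ r - Fintype.card F ^ (r - 1) else 0 := fun q => by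
    split_ifs with hq
    · exact card_filter_dotProduct_ne_zero hq
    · simp [not_not.1 hq]
  calc ∑ a : Fin r → F, wtv (truncv 0 j (∑ s, C (a s) • c s))
      = ∑ q ∈ univ ×ˢ Icc 0 j, #{a : Fin r → F | a ⬝ᵥ v q ≠ 0} := by
        simp only [wtv_truncv_zero, coeff_sum_C_smul, card_filter]
        exact sum_comm
    _ = _ := by
        rw [sum_congr rfl fun q _ => hcount q, ← sum_filter, sum_const, smul_eq_mul, mul_comm,
          gsupp_truncv_zero, Set.ncard_coe_finset]

theorem ncard_gsupp_truncv_eq_of_wtv_eq (j : ℕ) {r : ℕ} {c d : Fin r → Fin n → F[X]}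
    (h : ∀ a : Fin r → F, wtv (truncv 0 j (∑ s, C (a s) • c s)) =
      wtv (truncv 0 j (∑ s, C (a s) • d s))) :
    (gsupp fun s => truncv 0 j (c s)).ncard = (gsupp fun s => truncv 0 j (d s)).ncard := by
  rcases Nat.eq_zero_or_pos r with rfl | hr
  · simp [gsupp]
  have hpos : 0 < Fintype.card F ^ r - Fintype.card F ^ (r - 1) :=
    Nat.sub_pos_of_lt (Nat.pow_lt_pow_right Fintype.one_lt_card (by omega))
  refine Nat.eq_of_mul_eq_mul_left hpos ?_
  rw [← sum_wtv_truncv_sum_C_smul, ← sum_wtv_truncv_sum_C_smul]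
  exact sum_congr rfl fun a _ => h a

end Counting

section Codes

variable {F : Type*} [Field F] {n k : ℕ} {C C1 C2 : Submodule F[X] (Fin n → F[X])}

noncomputable def IsGenMat.vecMulEquiv {G : Matrix (Fin k) (Fin n) F[X]} (hG : IsGenMat C G) :
    (Fin k → F[X]) ≃ₗ[F[X]] C :=
  (LinearEquiv.ofInjective G.vecMulLinear (vecMul_injective_iff.2 hG.1)).trans
    (LinearEquiv.ofEq _ _ ((range_vecMulLinear G).trans hG.2))

@[simp]
theorem IsGenMat.coe_vecMulEquiv_apply {G : Matrix (Fin k) (Fin n) F[X]} (hG : IsGenMat C G)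
    (u : Fin k → F[X]) : (hG.vecMulEquiv u : Fin n → F[X]) = u ᵥ* G :=
  rfl

theorem IsJEquiv.symm {φ : C1 ≃ₗ[F[X]] C2} {j : ℕ} (hφ : IsJEquiv C1 C2 φ j) :
    IsJEquiv C2 C1 φ.symm j := fun c => by
  simpa using (hφ (φ.symm c)).symm

variable [Fintype F]

theorem IsJEquiv.ncard_gsupp_truncv_map {φ : C1 ≃ₗ[F[X]] C2} {j : ℕ}
    (hφ : IsJEquiv C1 C2 φ j) {r : ℕ} (x : Fin r → C1) :
    (gsupp fun s => truncv 0 j (x s : Fin n → F[X])).ncard =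
      (gsupp fun s => truncv 0 j ((φ (x s) : C2) : Fin n → F[X])).ncard :=
  ncard_gsupp_truncv_eq_of_wtv_eq j fun a => by simpa using hφ (∑ s, C (a s) • x s)

theorem IsJEquiv.exists_gcdJ_witness {G1 G2 : Matrix (Fin k) (Fin n) F[X]}
    (hG1 : IsGenMat C1 G1) (hG2 : IsGenMat C2 G2) {φ : C1 ≃ₗ[F[X]] C2} {j : ℕ}
    (hφ : IsJEquiv C1 C2 φ j) {r : ℕ} {p : Fin r → Fin k → F[X]}
    (hp : LinearIndependent F fun s l => (p s l).eval 0) :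
    ∃ p' : Fin r → Fin k → F[X], LinearIndependent F (fun s l => (p' s l).eval 0) ∧
      (gsupp fun s => truncv 0 j (p s ᵥ* G1)).ncard =
        (gsupp fun s => truncv 0 j (p' s ᵥ* G2)).ncard := by
  set θ := hG1.vecMulEquiv ≪≫ₗ φ ≪≫ₗ hG2.vecMulEquiv.symm
  have hθ : ∀ s, θ (p s) ᵥ* G2 = φ (hG1.vecMulEquiv (p s)) := fun s => by
    rw [← hG2.coe_vecMulEquiv_apply]
    simp [θ]
  refine ⟨fun s => θ (p s), hp.eval_zero_map θ, ?_⟩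
  simp only [hθ, ← hG1.coe_vecMulEquiv_apply]
  exact hφ.ncard_gsupp_truncv_map _

theorem gcdJ_eq_of_isJEquiv {G1 G2 : Matrix (Fin k) (Fin n) F[X]}
    (hG1 : IsGenMat C1 G1) (hG2 : IsGenMat C2 G2) {φ : C1 ≃ₗ[F[X]] C2} {j : ℕ}
    (hφ : IsJEquiv C1 C2 φ j) (r : ℕ) : gcdJ G1 r j = gcdJ G2 r j := by
  refine congrArg sInf (Set.ext fun m => ⟨?_, ?_⟩) <;> rintro ⟨p, hp, rfl⟩
  · exact hφ.exists_gcdJ_witness hG1 hG2 hp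
  · exact hφ.symm.exists_gcdJ_witness hG2 hG1 hp

end Codes

end ConvCode

open ConvCode
theorem gcdLim_equiv_invariant_general {F : Type*} [Field F] [Fintype F] {n k : ℕ}
    (C1 C2 : Submodule (Polynomial F) (Fin n → Polynomial F))
    (G1 : Matrix (Fin k) (Fin n) (Polynomial F)) (hG1 : IsGenMat C1 G1)
    (G2 : Matrix (Fin k) (Fin n) (Polynomial F)) (hG2 : IsGenMat C2 G2)
    (φ : C1 ≃ₗ[Polynomial F] C2) (hφ : IsEquiv C1 C2 φ) :
    ∀ r : ℕ, 1 ≤ r → r ≤ k → gcdLim G1 r = gcdLim G2 r := fun r _ _ =>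
  congrArg (Filter.limsup · Filter.atTop) (funext fun j => gcdJ_eq_of_isJEquiv hG1 hG2 (hφ j) r)

/-- `r`-generalized column distances are invariant under equivalence. -/
theorem gcdLim_equiv_invariant {F : Type*} [Field F] [Fintype F] {n k : ℕ}
    (C1 C2 : Submodule (Polynomial F) (Fin n → Polynomial F))
    (hk : 1 ≤ k) (hkn : k ≤ n)
    (G1 : Matrix (Fin k) (Fin n) (Polynomial F)) (hG1 : IsGenMat C1 G1)
    (G2 : Matrix (Fin k) (Fin n) (Polynomial F)) (hG2 : IsGenMat C2 G2)
    (φ : C1 ≃ₗ[Polynomial F] C2) (hφ : IsEquiv C1 C2 φ) :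
    ∀ r : ℕ, 1 ≤ r → r ≤ k → gcdLim G1 r = gcdLim G2 r :=
  gcdLim_equiv_invariant_general C1 C2 G1 hG1 G2 hG2 φ hφ
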